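/- Assume β ∈ [0,1] and M > 10. There exists a constant C > 0 (depending only on β and M) such that for all ω₁ > 1 one has C¹²³[n⁰¹, n⁰¹, n⁰¹](ω₁) ≤ C · ω₁^{2β − 1/2 − M/2}. -/

import Mathlib

open MeasureTheory Real

noncomputable section

/-- Japanese bracket ⟨ω⟩ = (1 + ω²)^{1/2}. -/
def jb (ω : ℝ) : ℝ := Real.sqrt (1 + ω ^ 2)

/-- n⁰¹(ω) = ⟨ω⟩^{-M/2}. -/
def n01 (M : ℝ) (ω : ℝ) : ℝ := jb ω ^ (-(M / 2))

/-- The operator C₂₁²³⁴, with ω₂ = ω₃ + ω₄ − ω₁. -/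
def C21op (β : ℝ) (k l m : ℝ → ℝ) (ω₁ : ℝ) : ℝ :=
  64 * π ^ 3 * ω₁ ^ (β - 1/2) *
    ∫ ω₃ in (0:ℝ)..(ω₁ / 2), ∫ ω₄ in (ω₁ - ω₃)..ω₁,
      (ω₃ + ω₄ - ω₁) ^ (β + 1/2) * ω₃ ^ β * ω₄ ^ β *
        (k (ω₃ + ω₄ - ω₁) * l ω₃ * m ω₄)

/-- The operator C₂₂²³⁴, with ω₂ = ω₃ + ω₄ − ω₁. -/
def C22op (β : ℝ) (k l m : ℝ → ℝ) (ω₁ : ℝ) : ℝ :=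
  64 * π ^ 3 * ω₁ ^ (β - 1/2) *
    ∫ ω₃ in (ω₁ / 2)..ω₁, ∫ ω₄ in ω₃..ω₁,
      (ω₃ + ω₄ - ω₁) ^ (β + 1/2) * ω₃ ^ β * ω₄ ^ β *
        (k (ω₃ + ω₄ - ω₁) * l ω₃ * m ω₄)

/-- The operator C₃²³⁴, with ω₂ = ω₃ + ω₄ − ω₁. -/
def C3op (β : ℝ) (k l m : ℝ → ℝ) (ω₁ : ℝ) : ℝ :=
  64 * π ^ 3 * ω₁ ^ (β - 1/2) *
    ∫ ω₃ in (0:ℝ)..ω₁, ∫ ω₄ in Set.Ioi ω₁,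
      (ω₃ + ω₄ - ω₁) ^ β * ω₃ ^ (β + 1/2) * ω₄ ^ β *
        (k (ω₃ + ω₄ - ω₁) * l ω₃ * m ω₄)

/-- The operator C₁²³⁴, with ω₂ = ω₃ + ω₄ − ω₁. -/
def C1op (β : ℝ) (k l m : ℝ → ℝ) (ω₁ : ℝ) : ℝ :=
  64 * π ^ 3 * ω₁ ^ β *
    ∫ ω₃ in Set.Ioi ω₁, ∫ ω₄ in Set.Ioi ω₃,
      (ω₃ + ω₄ - ω₁) ^ β * ω₃ ^ β * ω₄ ^ β *
        (k (ω₃ + ω₄ - ω₁) * l ω₃ * m ω₄)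

/-- The full domain of integration {0 ≤ ω₃ ≤ ω₄, ω₃ + ω₄ ≥ ω₁} ⊂ ℝ². -/
def Dom (ω₁ : ℝ) : Set (ℝ × ℝ) := {p | 0 ≤ p.1 ∧ p.1 ≤ p.2 ∧ ω₁ ≤ p.1 + p.2}

/-- The cross-section factor min{√ω₁, √ω₂, √ω₃}, with ω₂ = ω₃ + ω₄ − ω₁,
where p = (ω₃, ω₄). -/
def crossMin (ω₁ : ℝ) (p : ℝ × ℝ) : ℝ :=
  min (Real.sqrt ω₁) (min (Real.sqrt (p.1 + p.2 - ω₁)) (Real.sqrt p.1))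

/-- The operator C^{j₁j₂j₃}[k,l,m](ω₁) where the factor is k(ω_{j₁}) l(ω_{j₂}) m(ω_{j₃}),
with ω₂ = ω₃ + ω₄ − ω₁ and p = (ω₃, ω₄); here the selection of frequencies is passed
as a function `sel : (ℝ × ℝ) → ℝ × ℝ × ℝ` giving (ω_{j₁}, ω_{j₂}, ω_{j₃}). -/
def Cfull (β : ℝ) (k l m : ℝ → ℝ) (sel : ℝ → ℝ × ℝ → ℝ × ℝ × ℝ) (ω₁ : ℝ) : ℝ :=
  64 * π ^ 3 * ω₁ ^ (β - 1/2) *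
    ∫ p in Dom ω₁,
      ((p.1 + p.2 - ω₁) * p.1 * p.2) ^ β * crossMin ω₁ p *
        (k (sel ω₁ p).1 * l (sel ω₁ p).2.1 * m (sel ω₁ p).2.2)

/-- C²³⁴[k,l,m](ω₁): integrand k(ω₂) l(ω₃) m(ω₄). -/
def C234 (β : ℝ) (k l m : ℝ → ℝ) : ℝ → ℝ :=
  Cfull β k l m (fun ω₁ p => (p.1 + p.2 - ω₁, p.1, p.2))

/-- C¹²⁴[k,l,m](ω₁): integrand k(ω₁) l(ω₂) m(ω₄). -/
def C124 (β : ℝ) (k l m : ℝ → ℝ) : ℝ → ℝ :=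
  Cfull β k l m (fun ω₁ p => (ω₁, p.1 + p.2 - ω₁, p.2))

/-- C¹³⁴[k,l,m](ω₁): integrand k(ω₁) l(ω₃) m(ω₄). -/
def C134 (β : ℝ) (k l m : ℝ → ℝ) : ℝ → ℝ :=
  Cfull β k l m (fun ω₁ p => (ω₁, p.1, p.2))

/-- C¹²³[k,l,m](ω₁): integrand k(ω₁) l(ω₂) m(ω₃). -/
def C123 (β : ℝ) (k l m : ℝ → ℝ) : ℝ → ℝ :=
  Cfull β k l m (fun ω₁ p => (ω₁, p.1 + p.2 - ω₁, p.1))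


/-!
On the domain of integration ω₂, ω₃ ≥ 0 and, as ω₁ ≥ 1, ω₄ = ω₂ + ω₁ - ω₃ ≤ ω₁ (1 + ω₂). Hence
(ω₂ ω₃ ω₄)^β ≤ ω₁^β (1 + ω₂)² (1 + ω₃), the minimum is at most √ω₃ ≤ 1 + ω₃, and
n⁰¹(ω₁) ≤ ω₁^{-M/2}. Since (1 + x)² n⁰¹(x) ≤ 2 (1 + x²)⁻¹ once M ≥ 8, the integrand is at most
4 ω₁^{β - M/2} (1 + ω₃²)⁻¹ (1 + ω₂²)⁻¹. Enlarging the domain to ℝ² and shearing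
(ω₃, ω₄) ↦ (ω₃, ω₃ + ω₄), this integrates to 4 ω₁^{β - M/2} π², which gives the constant 256 π⁵.
-/
lemma one_le_jb (x : ℝ) : 1 ≤ jb x :=
  Real.one_le_sqrt.mpr (by nlinarith [sq_nonneg x])

lemma le_jb (x : ℝ) : x ≤ jb x :=
  (le_abs_self x).trans (Real.abs_le_sqrt (by linarith))

lemma jb_sq (x : ℝ) : jb x ^ 2 = 1 + x ^ 2 := Real.sq_sqrt (by positivity)

lemma n01_nonneg (M x : ℝ) : 0 ≤ n01 M x :=
  Real.rpow_nonneg (zero_le_one.trans (one_le_jb x)) _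

lemma n01_le_rpow_neg {M x : ℝ} (hM : 0 ≤ M) (hx : 0 < x) : n01 M x ≤ x ^ (-(M / 2)) :=
  Real.rpow_le_rpow_of_nonpos hx (le_jb x) (by linarith)

lemma n01_le_inv_one_add_sq_sq {M : ℝ} (hM : 8 ≤ M) (x : ℝ) :
    n01 M x ≤ ((1 + x ^ 2) ^ 2)⁻¹ := by
  calc n01 M x ≤ jb x ^ (-4 : ℝ) :=
        Real.rpow_le_rpow_of_exponent_le (one_le_jb x) (by linarith)
    _ = ((1 + x ^ 2) ^ 2)⁻¹ := by
        rw [Real.rpow_neg (zero_le_one.trans (one_le_jb x)), ← jb_sq, ← pow_mul]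
        norm_cast

lemma one_add_sq_mul_n01_le {M : ℝ} (hM : 8 ≤ M) (x : ℝ) :
    (1 + x) ^ 2 * n01 M x ≤ 2 * (1 + x ^ 2)⁻¹ := by
  have hpos : 0 < 1 + x ^ 2 := by positivity
  calc (1 + x) ^ 2 * n01 M x ≤ (2 * (1 + x ^ 2)) * ((1 + x ^ 2) ^ 2)⁻¹ := by
        gcongr
        · exact n01_nonneg M x
        · nlinarith [sq_nonneg (x - 1)]
        · exact n01_le_inv_one_add_sq_sq hM x
    _ = 2 * (1 + x ^ 2)⁻¹ := by field_simp

section ShearIntegral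

variable {G : Type*} [MeasurableSpace G] [AddGroup G] [MeasurableAdd₂ G] [MeasurableNeg G]
  {μ : Measure G} [SFinite μ] [μ.IsAddLeftInvariant]

lemma integrable_mul_comp_add {f g : G → ℝ} (hf : Integrable f μ) (hg : Integrable g μ) :
    Integrable (fun p : G × G => f p.1 * g (p.1 + p.2)) (μ.prod μ) :=
  (measurePreserving_prod_add μ μ).integrable_comp_emb
    (MeasurableEquiv.shearAddRight G).measurableEmbedding |>.mpr (hf.mul_prod hg)

lemma integral_mul_comp_add (f g : G → ℝ) :
    ∫ p : G × G, f p.1 * g (p.1 + p.2) ∂μ.prod μ = (∫ x, f x ∂μ) * ∫ x, g x ∂μ := by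
  rw [← integral_prod_mul]
  exact (measurePreserving_prod_add μ μ).integral_comp
    (MeasurableEquiv.shearAddRight G).measurableEmbedding (fun p => f p.1 * g p.2)

end ShearIntegral

lemma integrable_inv_one_add_sq_mul_shift (c : ℝ) :
    Integrable (fun p : ℝ × ℝ => (1 + p.1 ^ 2)⁻¹ * (1 + (p.1 + p.2 - c) ^ 2)⁻¹) := by
  rw [Measure.volume_eq_prod]
  exact integrable_mul_comp_add integrable_inv_one_add_sq
    (integrable_inv_one_add_sq.comp_sub_right c)

lemma integral_inv_one_add_sq_mul_shift (c : ℝ) :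
    ∫ p : ℝ × ℝ, (1 + p.1 ^ 2)⁻¹ * (1 + (p.1 + p.2 - c) ^ 2)⁻¹ = π ^ 2 := by
  rw [Measure.volume_eq_prod,
    integral_mul_comp_add (fun x : ℝ => (1 + x ^ 2)⁻¹) (fun y => (1 + (y - c) ^ 2)⁻¹),
    integral_sub_right_eq_self (fun y : ℝ => (1 + y ^ 2)⁻¹), integral_univ_inv_one_add_sq, sq]

lemma measurableSet_Dom (ω₁ : ℝ) : MeasurableSet (Dom ω₁) := by
  unfold Dom; measurability

def integrand123 (β M ω₁ : ℝ) (p : ℝ × ℝ) : ℝ :=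
  ((p.1 + p.2 - ω₁) * p.1 * p.2) ^ β * crossMin ω₁ p *
    (n01 M ω₁ * n01 M (p.1 + p.2 - ω₁) * n01 M p.1)

lemma integrand123_nonneg {β M ω₁ : ℝ} {p : ℝ × ℝ} (hp : p ∈ Dom ω₁) :
    0 ≤ integrand123 β M ω₁ p := by
  obtain ⟨ha, hab, hsum⟩ := hp
  have := n01_nonneg M ω₁
  have := n01_nonneg M (p.1 + p.2 - ω₁)
  have := n01_nonneg M p.1
  have : 0 ≤ (p.1 + p.2 - ω₁) * p.1 * p.2 := by
    apply mul_nonneg (mul_nonneg _ ha) <;> linarith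
  unfold integrand123 crossMin
  positivity

lemma integrand123_le {β M ω₁ : ℝ} (hβ0 : 0 ≤ β) (hβ1 : β ≤ 1) (hM : 8 ≤ M) (hω : 1 ≤ ω₁)
    {p : ℝ × ℝ} (hp : p ∈ Dom ω₁) :
    integrand123 β M ω₁ p ≤
      4 * ω₁ ^ (β - M / 2) * ((1 + p.1 ^ 2)⁻¹ * (1 + (p.1 + p.2 - ω₁) ^ 2)⁻¹) := by
  obtain ⟨ha, hab, hsum⟩ := hp
  set a := p.1
  set w := p.1 + p.2 - ω₁
  have hw : 0 ≤ w := by linarith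
  have hω0 : 0 < ω₁ := by linarith
  have hprod : w * a * p.2 ≤ ω₁ * ((1 + w) ^ 2 * (1 + a)) :=
    calc w * a * p.2 ≤ (1 + w) * (1 + a) * (ω₁ * (1 + w)) := by
          gcongr <;> nlinarith
      _ = ω₁ * ((1 + w) ^ 2 * (1 + a)) := by ring
  have hpow : (w * a * p.2) ^ β ≤ ω₁ ^ β * ((1 + w) ^ 2 * (1 + a)) :=
    calc (w * a * p.2) ^ β ≤ (ω₁ * ((1 + w) ^ 2 * (1 + a))) ^ β :=
          Real.rpow_le_rpow (mul_nonneg (mul_nonneg hw ha) (ha.trans hab)) hprod hβ0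
      _ = ω₁ ^ β * ((1 + w) ^ 2 * (1 + a)) ^ β := Real.mul_rpow hω0.le (by positivity)
      _ ≤ ω₁ ^ β * ((1 + w) ^ 2 * (1 + a)) := by
          gcongr; exact Real.rpow_le_self_of_one_le (one_le_mul_of_one_le_of_one_le
            (one_le_pow₀ (by linarith)) (by linarith)) hβ1
  have hcross : crossMin ω₁ p ≤ 1 + a :=
    (min_le_right _ _).trans <| (min_le_right _ _).trans <|
      (Real.sqrt_le_left (by linarith)).mpr (by nlinarith)
  have hw' := one_add_sq_mul_n01_le hM w
  have ha' := one_add_sq_mul_n01_le hM a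
  have := n01_nonneg M w
  have := n01_nonneg M a
  have := n01_nonneg M ω₁
  have : 0 ≤ crossMin ω₁ p := by unfold crossMin; positivity
  calc integrand123 β M ω₁ p
      ≤ ω₁ ^ β * ((1 + w) ^ 2 * (1 + a)) * (1 + a) * (ω₁ ^ (-(M / 2)) * n01 M w * n01 M a) := by
        unfold integrand123
        gcongr
        exact n01_le_rpow_neg (by linarith) hω0
    _ = ω₁ ^ β * ω₁ ^ (-(M / 2)) * (((1 + a) ^ 2 * n01 M a) * ((1 + w) ^ 2 * n01 M w)) := by
        ring
    _ ≤ ω₁ ^ (β - M / 2) * ((2 * (1 + a ^ 2)⁻¹) * (2 * (1 + w ^ 2)⁻¹)) := by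
        rw [← Real.rpow_add hω0, ← sub_eq_add_neg]
        gcongr
    _ = 4 * ω₁ ^ (β - M / 2) * ((1 + a ^ 2)⁻¹ * (1 + w ^ 2)⁻¹) := by ring

lemma setIntegral_integrand123_le {β M ω₁ : ℝ} (hβ0 : 0 ≤ β) (hβ1 : β ≤ 1) (hM : 8 ≤ M)
    (hω : 1 ≤ ω₁) :
    ∫ p in Dom ω₁, integrand123 β M ω₁ p ≤ 4 * ω₁ ^ (β - M / 2) * π ^ 2 := by
  have hint := (integrable_inv_one_add_sq_mul_shift ω₁).const_mul (4 * ω₁ ^ (β - M / 2))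
  have hDom := measurableSet_Dom ω₁
  calc ∫ p in Dom ω₁, integrand123 β M ω₁ p
      ≤ ∫ p in Dom ω₁, 4 * ω₁ ^ (β - M / 2) *
          ((1 + p.1 ^ 2)⁻¹ * (1 + (p.1 + p.2 - ω₁) ^ 2)⁻¹) :=
        integral_mono_of_nonneg
          ((ae_restrict_iff' hDom).mpr (.of_forall fun _ => integrand123_nonneg)) hint.restrict
          ((ae_restrict_iff' hDom).mpr (.of_forall fun _ => integrand123_le hβ0 hβ1 hM hω))
    _ ≤ ∫ p : ℝ × ℝ, 4 * ω₁ ^ (β - M / 2) *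
          ((1 + p.1 ^ 2)⁻¹ * (1 + (p.1 + p.2 - ω₁) ^ 2)⁻¹) :=
        setIntegral_le_integral hint (.of_forall fun _ => by positivity)
    _ = 4 * ω₁ ^ (β - M / 2) * π ^ 2 := by
        rw [integral_const_mul, integral_inv_one_add_sq_mul_shift]

/-- Upper bound: C¹²³[n⁰¹,n⁰¹,n⁰¹](ω₁) ≲ ω₁^{2β − 1/2 − M/2} for ω₁ > 1. -/
theorem C123_upper_bound (β M : ℝ) (hβ0 : 0 ≤ β) (hβ1 : β ≤ 1) (hM : 10 < M) :
    ∃ C : ℝ, 0 < C ∧ ∀ ω₁ : ℝ, 1 < ω₁ →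
      C123 β (n01 M) (n01 M) (n01 M) ω₁ ≤ C * ω₁ ^ (2 * β - 1/2 - M / 2) := by
  refine ⟨256 * π ^ 5, by positivity, fun ω₁ hω => ?_⟩
  have hω0 : 0 < ω₁ := by linarith
  calc C123 β (n01 M) (n01 M) (n01 M) ω₁
      = 64 * π ^ 3 * ω₁ ^ (β - 1/2) * ∫ p in Dom ω₁, integrand123 β M ω₁ p := rfl
    _ ≤ 64 * π ^ 3 * ω₁ ^ (β - 1/2) * (4 * ω₁ ^ (β - M / 2) * π ^ 2) := by
        gcongr; exact setIntegral_integrand123_le hβ0 hβ1 (by linarith) hω.le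
    _ = 256 * π ^ 5 * (ω₁ ^ (β - 1/2) * ω₁ ^ (β - M / 2)) := by ring
    _ = 256 * π ^ 5 * ω₁ ^ (2 * β - 1/2 - M / 2) := by
        rw [← Real.rpow_add hω0]; ring_nf
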